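/- Full correctness of Algorithm 2's equation (4)–(5): under the notation above, g_A^v̄ * (∏_i y_{A,i})^{-z} = (∏_i r_i)^r * ∏_j z_j, where v̄ = z*∑_i x_{A,i} + r*∑_i k_i. -/

import Mathlib

/-! Write `K = ∑ i, k i` and `Y = ∏ j, y_{B,j} = g_B ^ (∑ j, x_{B,j})`. Raising the product of the
commitments to the `r`-th power gives `g_A ^ (r K) * Y ^ (-(r K))`, while the verifier's shares
multiply to `s ^ (∑ j, x_{B,j}) = g_B ^ (r K ∑ j, x_{B,j}) = Y ^ (r K)`. The two `Y`-factors cancel,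
and the left-hand side is `g_A ^ (z ∑ x_A + r K) * g_A ^ (-z ∑ x_A) = g_A ^ (r K)` as well. -/

open Finset

variable {G ι : Type*} [CommGroup G]

theorem Finset.prod_zpow_eq_zpow_sum (s : Finset ι) (f : ι → ℤ) (a : G) :
    ∏ i ∈ s, a ^ f i = a ^ ∑ i ∈ s, f i := by
  induction s using Finset.cons_induction with
  | empty => simp
  | cons i s hi ih => rw [prod_cons, sum_cons, zpow_add, ih]

theorem Finset.prod_eq_zpow_sum_of_eq_zpow {s : Finset ι} {y : ι → G} {a : G} {x : ι → ℤ}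
    (hy : ∀ i, y i = a ^ x i) : ∏ i ∈ s, y i = a ^ ∑ i ∈ s, x i := by
  simp only [hy, prod_zpow_eq_zpow_sum]

theorem Finset.prod_zpow_mul_zpow_neg_zpow (s : Finset ι) (g Y : G) (k : ι → ℤ) (r : ℤ) :
    (∏ i ∈ s, g ^ k i * Y ^ (-(k i))) ^ r =
      g ^ ((∑ i ∈ s, k i) * r) * Y ^ (-((∑ i ∈ s, k i) * r)) := by
  rw [prod_mul_distrib, prod_zpow_eq_zpow_sum, prod_zpow_eq_zpow_sum, mul_zpow, ← zpow_mul,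
    ← zpow_mul, sum_neg_distrib, neg_mul]

theorem Finset.prod_zpow_zpow_eq_prod_zpow_of_eq_zpow (s : Finset ι) {y : ι → G} {g : G}
    {x : ι → ℤ} (hy : ∀ i, y i = g ^ x i) (c : ℤ) :
    ∏ i ∈ s, (g ^ c) ^ x i = (∏ i ∈ s, y i) ^ c := by
  rw [← prod_zpow]
  exact prod_congr rfl fun i _ ↦ by rw [hy, ← zpow_mul, ← zpow_mul, mul_comm]

theorem algorithm2_full_correctness_general
    (p : ℕ)
    (gA gB : (ZMod p)ˣ)
    (n m : ℕ) (xA k : Fin n → ℤ) (xB : Fin m → ℤ) (r z : ℤ)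
    (yA : Fin n → (ZMod p)ˣ) (hyA : ∀ i, yA i = gA ^ xA i)
    (yB : Fin m → (ZMod p)ˣ) (hyB : ∀ j, yB j = gB ^ xB j)
    (r_ : Fin n → (ZMod p)ˣ)
    (hr : ∀ i, r_ i = gA ^ k i * (∏ j, yB j) ^ (-(k i)))
    (s : (ZMod p)ˣ) (hs : s = (∏ i, gB ^ k i) ^ r)
    (z_ : Fin m → (ZMod p)ˣ) (hz : ∀ j, z_ j = s ^ xB j)
    (vbar : ℤ) (hv : vbar = z * (∑ i, xA i) + r * (∑ i, k i)) :
    gA ^ vbar * (∏ i, yA i) ^ (-z) = (∏ i, r_ i) ^ r * ∏ j, z_ j := by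
  have hlhs : gA ^ vbar * (∏ i, yA i) ^ (-z) = gA ^ ((∑ i, k i) * r) := by
    rw [prod_eq_zpow_sum_of_eq_zpow hyA, ← zpow_mul, ← zpow_add, hv]
    congr 1
    ring
  have hcommit :
      (∏ i, r_ i) ^ r = gA ^ ((∑ i, k i) * r) * (∏ j, yB j) ^ (-((∑ i, k i) * r)) := by
    simp only [hr, prod_zpow_mul_zpow_neg_zpow]
  have hshares : ∏ j, z_ j = (∏ j, yB j) ^ ((∑ i, k i) * r) := by
    rw [← prod_zpow_zpow_eq_prod_zpow_of_eq_zpow _ hyB]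
    simp only [hz, hs, prod_zpow_eq_zpow_sum, zpow_mul]
  rw [hlhs, hcommit, hshares, mul_assoc, ← zpow_add, neg_add_cancel, zpow_zero, mul_one]

/-- Full correctness of Algorithm 2's verification equation:
`g_A ^ v̄ * (∏ i, y_A i) ^ (-z) = (∏ i, r_ i) ^ r * ∏ j, z_ j`. -/
theorem algorithm2_full_correctness
    (p : ℕ) [Fact p.Prime]
    (gA gB : (ZMod p)ˣ)
    (n m : ℕ) (xA k : Fin n → ℤ) (xB : Fin m → ℤ) (r z : ℤ)
    (yA : Fin n → (ZMod p)ˣ) (hyA : ∀ i, yA i = gA ^ xA i)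
    (yB : Fin m → (ZMod p)ˣ) (hyB : ∀ j, yB j = gB ^ xB j)
    (r_ : Fin n → (ZMod p)ˣ)
    (hr : ∀ i, r_ i = gA ^ k i * (∏ j, yB j) ^ (-(k i)))
    (s : (ZMod p)ˣ) (hs : s = (∏ i, gB ^ k i) ^ r)
    (z_ : Fin m → (ZMod p)ˣ) (hz : ∀ j, z_ j = s ^ xB j)
    (vbar : ℤ) (hv : vbar = z * (∑ i, xA i) + r * (∑ i, k i)) :
    gA ^ vbar * (∏ i, yA i) ^ (-z) = (∏ i, r_ i) ^ r * ∏ j, z_ j :=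
  algorithm2_full_correctness_general p gA gB n m xA k xB r z yA hyA yB hyB r_ hr s hs z_ hz vbar hv
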